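/- Let λ ∈ ℂ with λ_i = Im λ < 0 and f ∈ L²((-∞, a]; H). Then the function s ↦ e^{−iλ(a−s)} exp(i(a−s)A) f(s) is Bochner integrable on (-∞, a), and ‖ ∫_{-∞}^a e^{−iλ(a−s)} exp(i(a−s)A) f(s) ds ‖² ≤ (1/(2|λ_i|)) ∫_{-∞}^a ‖f(s)‖² ds. -/

import Mathlib

/-!
Since `exp(iτA)` is unitary, the integrand has norm `w(s) ‖f(s)‖` with the scalar weight
`w(s) = e^{Im λ (a - s)}`. As `Im λ < 0`, `w` lies in `L²((-∞, a))` with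
`∫ w² = 1 / (2 |Im λ|)`, so Cauchy–Schwarz against `w` gives both the integrability and the bound.
-/

open MeasureTheory Set Complex
open scoped InnerProductSpace

/-- The operator exponential `exp(iτA)` for a bounded operator `A` and `τ ∈ ℝ`. -/
noncomputable def expIA {H : Type*} [NormedAddCommGroup H] [InnerProductSpace ℂ H]
    [CompleteSpace H] (A : H →L[ℂ] H) (τ : ℝ) : H →L[ℂ] H :=
  NormedSpace.exp ((Complex.I * (τ : ℂ)) • A)

section UnitaryGroup

variable {H : Type*} [NormedAddCommGroup H] [InnerProductSpace ℂ H] [CompleteSpace H]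

lemma IsSelfAdjoint.expIA_mem_unitary {A : H →L[ℂ] H} (hA : IsSelfAdjoint A) (τ : ℝ) :
    expIA A τ ∈ unitary (H →L[ℂ] H) := by
  have hτA : IsSelfAdjoint ((τ : ℂ) • A) := IsSelfAdjoint.smul (Complex.conj_ofReal τ) hA
  simpa [expIA, mul_smul] using (selfAdjoint.expUnitary ⟨_, hτA⟩).prop

lemma IsSelfAdjoint.norm_expIA_apply {A : H →L[ℂ] H} (hA : IsSelfAdjoint A) (τ : ℝ) (x : H) :
    ‖expIA A τ x‖ = ‖x‖ :=
  ContinuousLinearMap.norm_map_of_mem_unitary (hA.expIA_mem_unitary τ) x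

lemma continuous_expIA (A : H →L[ℂ] H) : Continuous (expIA A) := by
  let _ : NormedAlgebra ℚ (H →L[ℂ] H) := .restrictScalars ℚ ℂ _
  exact NormedSpace.exp_continuous.comp (by fun_prop)

end UnitaryGroup

section WeightedL2

variable {α E F G : Type*} [MeasurableSpace α] {μ : Measure α}
  [NormedAddCommGroup E] [NormedSpace ℝ E] [NormedAddCommGroup F] [NormedAddCommGroup G]

lemma integrable_norm_mul_norm_of_memLp_two {w : α → F} {f : α → G} (hw : MemLp w 2 μ)
    (hf : MemLp f 2 μ) : Integrable (fun x => ‖w x‖ * ‖f x‖) μ :=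
  hw.norm.integrable_mul hf.norm

lemma sq_integral_norm_mul_norm_le {w : α → F} {f : α → G} (hw : MemLp w 2 μ)
    (hf : MemLp f 2 μ) :
    (∫ x, ‖w x‖ * ‖f x‖ ∂μ) ^ 2 ≤ (∫ x, ‖w x‖ ^ 2 ∂μ) * ∫ x, ‖f x‖ ^ 2 ∂μ := by
  have holder := integral_mul_norm_le_Lp_mul_Lq Real.HolderConjugate.two_two
    (by simpa using hw.norm) (by simpa using hf.norm)
  simp only [norm_norm, Real.rpow_two, ← Real.sqrt_eq_rpow] at holder
  calc (∫ x, ‖w x‖ * ‖f x‖ ∂μ) ^ 2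
      ≤ (√(∫ x, ‖w x‖ ^ 2 ∂μ) * √(∫ x, ‖f x‖ ^ 2 ∂μ)) ^ 2 :=
        pow_le_pow_left₀ (integral_nonneg fun x => by positivity) holder 2
    _ = (∫ x, ‖w x‖ ^ 2 ∂μ) * ∫ x, ‖f x‖ ^ 2 ∂μ := by
        rw [mul_pow, Real.sq_sqrt (integral_nonneg fun x => by positivity),
          Real.sq_sqrt (integral_nonneg fun x => by positivity)]

theorem integrable_and_sq_norm_integral_le_of_norm_le_mul [CompleteSpace E] {Φ : α → E}
    {w : α → F} {f : α → G} (hΦ : AEStronglyMeasurable Φ μ) (hw : MemLp w 2 μ)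
    (hf : MemLp f 2 μ) (hle : ∀ᵐ x ∂μ, ‖Φ x‖ ≤ ‖w x‖ * ‖f x‖) :
    Integrable Φ μ ∧
      ‖∫ x, Φ x ∂μ‖ ^ 2 ≤ (∫ x, ‖w x‖ ^ 2 ∂μ) * ∫ x, ‖f x‖ ^ 2 ∂μ := by
  have hwf := integrable_norm_mul_norm_of_memLp_two hw hf
  refine ⟨hwf.mono' hΦ hle, le_trans ?_ (sq_integral_norm_mul_norm_le hw hf)⟩
  gcongr
  exact norm_integral_le_of_norm_le hwf hle

end WeightedL2

lemma exp_mul_sub_sq (c a s : ℝ) :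
    Real.exp (c * (a - s)) ^ 2 = Real.exp (2 * c * a) * Real.exp (-(2 * c) * s) := by
  rw [← Real.exp_nat_mul, ← Real.exp_add]
  ring_nf

section HalfLine

variable {c : ℝ} (hc : c < 0) (a : ℝ)
include hc

lemma integrableOn_exp_mul_sub_sq_Iio :
    IntegrableOn (fun s => Real.exp (c * (a - s)) ^ 2) (Iio a) := by
  rw [← integrableOn_Iic_iff_integrableOn_Iio]
  simp_rw [exp_mul_sub_sq]
  exact (integrableOn_exp_mul_Iic (by linarith) a).const_mul _

lemma integral_exp_mul_sub_sq_Iio :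
    ∫ s in Iio a, Real.exp (c * (a - s)) ^ 2 = 1 / (2 * |c|) := by
  rw [setIntegral_congr_set Iio_ae_eq_Iic]
  simp_rw [exp_mul_sub_sq]
  rw [integral_const_mul, integral_exp_mul_Iic (by linarith), mul_div_assoc', ← Real.exp_add,
    show 2 * c * a + -(2 * c) * a = 0 by ring, Real.exp_zero, abs_of_neg hc]
  ring

end HalfLine

/-- For `Im λ < 0` and `f ∈ L²((-∞, a]; H)`, the function
`s ↦ e^{−iλ(a−s)} exp(i(a−s)A) f(s)` is Bochner integrable on `(-∞, a)` and
`‖∫_{-∞}^a e^{−iλ(a−s)} exp(i(a−s)A) f(s) ds‖² ≤ (1/(2|Im λ|)) ∫_{-∞}^a ‖f(s)‖² ds`. -/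
theorem integral_bound_left_halfline
    {H : Type*} [NormedAddCommGroup H] [InnerProductSpace ℂ H] [CompleteSpace H]
    (A : H →L[ℂ] H) (hA : IsSelfAdjoint A) (a : ℝ) (lam : ℂ) (hlam : lam.im < 0)
    (f : ℝ → H) (hf : MemLp f 2 (volume.restrict (Set.Iic a))) :
    IntegrableOn
      (fun s : ℝ => Complex.exp (-Complex.I * lam * ((a : ℂ) - (s : ℂ))) •
        (expIA A (a - s)) (f s)) (Set.Iio a) volume
    ∧ ‖∫ s in Set.Iio a, Complex.exp (-Complex.I * lam * ((a : ℂ) - (s : ℂ))) •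
          (expIA A (a - s)) (f s)‖ ^ 2
        ≤ (1 / (2 * |lam.im|)) * ∫ s in Set.Iio a, ‖f s‖ ^ 2 := by
  set F : ℝ → H := fun s => Complex.exp (-Complex.I * lam * ((a : ℂ) - (s : ℂ))) •
    (expIA A (a - s)) (f s)
  set w : ℝ → ℝ := fun s => Real.exp (lam.im * (a - s))
  have hwL2 : MemLp w 2 (volume.restrict (Iio a)) :=
    (memLp_two_iff_integrable_sq (by fun_prop : Continuous w).aestronglyMeasurable).2
      (integrableOn_exp_mul_sub_sq_Iio hlam a)
  have hfL2 : MemLp f 2 (volume.restrict (Iio a)) :=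
    hf.mono_measure (Measure.restrict_mono Iio_subset_Iic_self le_rfl)
  have hnorm : ∀ s, ‖F s‖ = ‖w s‖ * ‖f s‖ := by
    intro s
    rw [norm_smul, hA.norm_expIA_apply, Complex.norm_exp, Real.norm_of_nonneg (Real.exp_pos _).le]
    congr 2
    simp [Complex.mul_re, Complex.mul_im]
  have hmeas : AEStronglyMeasurable F (volume.restrict (Iio a)) :=
    (by fun_prop : Continuous fun s : ℝ => Complex.exp (-Complex.I * lam *
      ((a : ℂ) - (s : ℂ)))).aestronglyMeasurable.smul
      ((ContinuousLinearMap.id ℂ (H →L[ℂ] H)).aestronglyMeasurable_comp₂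
        ((continuous_expIA A).comp (by fun_prop)).aestronglyMeasurable hfL2.1)
  obtain ⟨hint, hbound⟩ := integrable_and_sq_norm_integral_le_of_norm_le_mul hmeas hwL2 hfL2
    (ae_of_all _ fun s => (hnorm s).le)
  refine ⟨hint, hbound.trans_eq ?_⟩
  simp_rw [Real.norm_eq_abs, sq_abs, w, integral_exp_mul_sub_sq_Iio hlam a]
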